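/- arXiv:1609.08308 — 2 statements merged into one kernel-verified Lean document; each statement's English description precedes it below -/
import Mathlib

section
/- For M = [[a,b],[c,d]] ∈ M₂(ℍ(ℝ)) with c ≠ 0, the Dieudonné determinant satisfies |σ|² = |a|²|d|² + |b|²|c|² - 2 Re(a c̄ d b̄), where σ = c a c⁻¹ d - c b. -/
open Quaternion

/-!
Expand `|x - y|² = |x|² + |y|² - 2 Re(x ȳ)` with `x = c a c⁻¹ d`, `y = c b`. The norm is
multiplicative, so `|x|² = |a|²|d|²`. Since `Re` is invariant under cyclic permutation,
`Re(x ȳ) = Re(c (a c⁻¹ d b̄) c̄) = |c|² Re(a c⁻¹ d b̄)`, and `|c|² c⁻¹ = c̄`.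
-/

namespace Quaternion

variable {R : Type*}

theorem re_mul_comm [CommRing R] (a b : ℍ[R]) : (a * b).re = (b * a).re := by
  simp only [re_mul]; ring

theorem normSq_sub [CommRing R] (a b : ℍ[R]) :
    normSq (a - b) = normSq a + normSq b - 2 * (a * star b).re := by
  rw [sub_eq_add_neg, normSq_add, normSq_neg, star_neg, mul_neg, re_neg]; ring

theorem re_mul_mul_star [CommRing R] (c w : ℍ[R]) : (c * w * star c).re = normSq c * w.re := by
  rw [re_mul_comm, ← mul_assoc, star_mul_self, coe_mul_eq_smul, re_smul, smul_eq_mul]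

theorem normSq_smul_inv [Field R] [LinearOrder R] [IsStrictOrderedRing R] {c : ℍ[R]} (hc : c ≠ 0) :
    normSq c • c⁻¹ = star c := by
  rw [inv_def, smul_smul, mul_inv_cancel₀ (normSq_ne_zero.2 hc), one_smul]

end Quaternion

/-- for `M = [[a,b],[c,d]] ∈ M₂(ℍ(ℝ))` with `c ≠ 0`, the pseudo-determinant
`σ = c a c⁻¹ d - c b` satisfies `|σ|² = |a|²|d|² + |b|²|c|² - 2 Re(a c̄ d b̄)`. -/
theorem stmt4 (a b c d : ℍ[ℝ]) (hc : c ≠ 0) :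
    normSq (c * a * c⁻¹ * d - c * b) =
      normSq a * normSq d + normSq b * normSq c -
        2 * (a * star c * d * star b).re := by
  have hconj : c * a * c⁻¹ * d * star (c * b) = c * (a * c⁻¹ * d * star b) * star c := by
    simp only [star_mul, mul_assoc]
  have hre : (c * (a * c⁻¹ * d * star b) * star c).re = (a * star c * d * star b).re := by
    rw [re_mul_mul_star, ← smul_eq_mul, ← re_smul, ← normSq_smul_inv hc, mul_smul_comm,
      smul_mul_assoc, smul_mul_assoc]
  have hnorm : normSq (c * a * c⁻¹ * d) = normSq a * normSq d := by
    simp only [map_mul, map_inv₀]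
    field_simp [normSq_ne_zero.2 hc]
  rw [normSq_sub, hconj, hre, hnorm, map_mul, mul_comm (normSq c)]
end

section
/- For M = [[α,β],[γ,δ]] ∈ SL₊(Γ_n(ℝ)), the identity |α - δ'|² + |β + γ'|² = ‖M‖² - 2 holds, where ‖M‖² = |α|² + |β|² + |γ|² + |δ|² and ' denotes the grade involution. Consequently ‖M‖² ≥ 2 for all M ∈ SL₊(Γ_n(ℝ)). -/
open CliffordAlgebra

/-- The negative-definite quadratic form on `ℝ^m`, so that `CliffordAlgebra (Qneg m)`
is the Clifford algebra on `m` anticommuting generators each squaring to `-1`. -/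
noncomputable def Qneg (m : ℕ) : QuadraticForm ℝ (Fin m → ℝ) :=
  -(QuadraticMap.weightedSumSquares ℝ (fun _ : Fin m => (1 : ℝ)))

/-- The `h`-th generator `i_h`. -/
noncomputable def gen (m : ℕ) (h : Fin m) : CliffordAlgebra (Qneg m) :=
  ι (Qneg m) (Pi.single h 1)

/-- The scalar (grade-0) coefficient of a Clifford algebra element. -/
noncomputable def scalarPart {m : ℕ} (x : CliffordAlgebra (Qneg m)) : ℝ :=
  letI : Invertible (2 : ℝ) := invertibleOfNonzero two_ne_zero
  ExteriorAlgebra.algebraMapInv ((CliffordAlgebra.equivExterior (Qneg m)) x)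

/-- Clifford conjugation `x ↦ x̄`, the composite of reversal and the grade involution. -/
noncomputable def cconj {m : ℕ} (x : CliffordAlgebra (Qneg m)) : CliffordAlgebra (Qneg m) :=
  CliffordAlgebra.reverse (CliffordAlgebra.involute x)

/-- The square norm `|x|² = ∑ x_I²` of a Clifford element (sum of squares of the
coordinates in the standard monomial basis), realized as the scalar part of `x̄ x`. -/
noncomputable def cnormSq {m : ℕ} (x : CliffordAlgebra (Qneg m)) : ℝ :=
  scalarPart (cconj x * x)

/-- Clifford vectors: elements of the form `a₀ + a₁ i₁ + ⋯ + a_m i_m` (the paper's `V`). -/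
def IsCliffordVector {m : ℕ} (x : CliffordAlgebra (Qneg m)) : Prop :=
  ∃ (a : ℝ) (v : Fin m → ℝ), x = algebraMap ℝ _ a + ι (Qneg m) v

/-- The Clifford group `Γ`: products of invertible Clifford vectors. -/
noncomputable def CliffordGroup (m : ℕ) : Submonoid (CliffordAlgebra (Qneg m)) :=
  Submonoid.closure {x | IsCliffordVector x ∧ IsUnit x}

/-- The Vahlen conditions on the entries of a matrix `[[α,β],[γ,δ]] ∈ SL₊(Γ_n(ℝ))`. -/
def IsVahlen {m : ℕ} (α β γ δ : CliffordAlgebra (Qneg m)) : Prop :=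
  (α ∈ CliffordGroup m ∨ α = 0) ∧ (β ∈ CliffordGroup m ∨ β = 0) ∧
  (γ ∈ CliffordGroup m ∨ γ = 0) ∧ (δ ∈ CliffordGroup m ∨ δ = 0) ∧
  α * reverse δ - β * reverse γ = 1 ∧
  IsCliffordVector (α * reverse β) ∧ IsCliffordVector (γ * reverse δ) ∧
  IsCliffordVector (reverse γ * α) ∧ IsCliffordVector (reverse δ * β)

/-!
The ordered products `genProd s` of generators over subsets `s` satisfy
`genProd s * genProd t = ± genProd (s ∆ t)`, so they span the algebra, and they are orthonormal for
`⟨x, y⟩ = [x̄ y]₀`, where `[·]₀` is the scalar part. Hence `cnormSq` is a sum of squares of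
coordinates, and checking on this basis shows that `[·]₀` is invariant under reversal, the grade
involution and cyclic permutation of products. Together these give `⟨x, y'⟩ = [x ỹ]₀` and
`|y'| = |y|`, so expanding the two squares gives
`|α - δ'|² + |β + γ'|² = ‖M‖² - 2 [α δ̃ - β γ̃]₀ = ‖M‖² - 2`.
-/

open scoped symmDiff

lemma Finset.insert_eq_singleton_symmDiff {α : Type*} [DecidableEq α] {a : α} {s : Finset α}
    (ha : a ∉ s) : insert a s = {a} ∆ s := by
  ext x
  by_cases hx : x = a <;> simp_all [Finset.mem_symmDiff]

section

variable {m : ℕ}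

lemma Qneg_apply (v : Fin m → ℝ) : Qneg m v = -∑ i, v i * v i := by
  simp [Qneg, QuadraticMap.weightedSumSquares_apply]

lemma polar_Qneg (v w : Fin m → ℝ) :
    QuadraticMap.polar (Qneg m) v w = -2 * ∑ i, v i * w i := by
  simp only [QuadraticMap.polar, Qneg_apply, Pi.add_apply, Finset.mul_sum,
    ← Finset.sum_neg_distrib, ← Finset.sum_sub_distrib]
  exact Finset.sum_congr rfl fun i _ => by ring

lemma associated_neg_Qneg (v w : Fin m → ℝ) :
    QuadraticMap.associated (-Qneg m) v w = ∑ i, v i * w i := by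
  rw [QuadraticMap.associated_apply, ← QuadraticMap.polar, FunLike.coe_neg,
    QuadraticMap.polar_neg, polar_Qneg]
  simp

lemma associated_neg_Qneg_single (h k : Fin m) :
    QuadraticMap.associated (-Qneg m) (Pi.single h 1) (Pi.single k 1) = if h = k then 1 else 0 := by
  rw [associated_neg_Qneg]
  simp [Pi.single_apply, eq_comm]

lemma gen_mul_self (h : Fin m) : gen m h * gen m h = -1 := by
  simp [gen, ι_sq_scalar, Qneg_apply, Pi.single_apply]

lemma gen_mul_gen_of_ne {h k : Fin m} (hne : h ≠ k) : gen m h * gen m k = -(gen m k * gen m h) := by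
  refine eq_neg_of_add_eq_zero_left ?_
  simp [gen, ι_mul_ι_add_swap, polar_Qneg, Pi.single_apply, hne.symm]

noncomputable def scalarPartₗ (m : ℕ) : CliffordAlgebra (Qneg m) →ₗ[ℝ] ℝ :=
  letI : Invertible (2 : ℝ) := invertibleOfNonzero two_ne_zero
  ExteriorAlgebra.algebraMapInv.toLinearMap ∘ₗ (equivExterior (Qneg m)).toLinearMap

@[simp] lemma scalarPartₗ_apply (x : CliffordAlgebra (Qneg m)) :
    scalarPartₗ m x = scalarPart x := rfl

@[simp] lemma scalarPart_zero : scalarPart (0 : CliffordAlgebra (Qneg m)) = 0 :=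
  map_zero (scalarPartₗ m)

lemma scalarPart_smul (c : ℝ) (x : CliffordAlgebra (Qneg m)) :
    scalarPart (c • x) = c * scalarPart x :=
  map_smul (scalarPartₗ m) c x

lemma scalarPart_sub (x y : CliffordAlgebra (Qneg m)) :
    scalarPart (x - y) = scalarPart x - scalarPart y :=
  map_sub (scalarPartₗ m) x y

lemma scalarPart_algebraMap (r : ℝ) :
    scalarPart (algebraMap ℝ (CliffordAlgebra (Qneg m)) r) = r := by
  let : Invertible (2 : ℝ) := invertibleOfNonzero two_ne_zero
  rw [scalarPart, equivExterior, changeFormEquiv_apply, changeForm_algebraMap]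
  exact ExteriorAlgebra.algebraMap_leftInverse _ r

lemma scalarPart_one : scalarPart (1 : CliffordAlgebra (Qneg m)) = 1 := by
  simpa using scalarPart_algebraMap (m := m) 1

/-- `equivExterior` turns `ι v * x` into `ι v ∧ x - v⌋x`, and a wedge with a vector has no
scalar part. -/
lemma scalarPart_ι_mul (v : Fin m → ℝ) (x : CliffordAlgebra (Qneg m)) :
    scalarPart (ι (Qneg m) v * x) =
      -scalarPart (contractLeft (QuadraticMap.associated (-Qneg m) v) x) := by
  let : Invertible (2 : ℝ) := invertibleOfNonzero two_ne_zero
  simp only [scalarPart, equivExterior, changeFormEquiv_apply, changeForm_ι_mul, map_sub, map_mul,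
    changeForm_contractLeft]
  rw [show ExteriorAlgebra.algebraMapInv (ι 0 v) = (0 : ℝ) from
    ExteriorAlgebra.lift_ι_apply ℝ _ _ v, zero_mul, zero_sub]

/-- The paper's basis monomial `i_{s₁} ⋯ i_{s_k}` for `s = {s₁ < ⋯ < s_k}`. -/
noncomputable def genProd (m : ℕ) (s : Finset (Fin m)) : CliffordAlgebra (Qneg m) :=
  (s.sort.map (gen m)).prod

@[simp] lemma genProd_empty : genProd m ∅ = 1 := by simp [genProd]

@[simp] lemma genProd_singleton (h : Fin m) : genProd m {h} = gen m h := by simp [genProd]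

lemma genProd_insert_of_lt {a : Fin m} {s : Finset (Fin m)} (ha : ∀ b ∈ s, a < b) :
    genProd m (insert a s) = gen m a * genProd m s := by
  rw [genProd, Finset.sort_insert _ (fun b hb => (ha b hb).le) (fun h => lt_irrefl a (ha a h))]
  simp [genProd]

lemma gen_mul_genProd (h : Fin m) (s : Finset (Fin m)) :
    ∃ c : ℝ, gen m h * genProd m s = c • genProd m ({h} ∆ s) := by
  induction s using Finset.induction_on_min with
  | empty => exact ⟨1, by rw [← Finset.bot_eq_empty, symmDiff_bot]; simp⟩
  | insert k t hk ih =>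
    have hkt : k ∉ t := fun hm => lt_irrefl k (hk k hm)
    rcases lt_trichotomy h k with hlt | rfl | hgt
    · have hht : ∀ b ∈ insert k t, h < b := by
        simpa [hlt] using fun b hb => hlt.trans (hk b hb)
      refine ⟨1, ?_⟩
      rw [one_smul, ← Finset.insert_eq_singleton_symmDiff (fun hm => lt_irrefl h (hht h hm)),
        genProd_insert_of_lt hht]
    · refine ⟨-1, ?_⟩
      rw [genProd_insert_of_lt hk, Finset.insert_eq_singleton_symmDiff hkt,
        symmDiff_symmDiff_cancel_left, ← mul_assoc, gen_mul_self, neg_one_mul, neg_one_smul]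
    · obtain ⟨c, hc⟩ := ih
      have hk' : ∀ b ∈ {h} ∆ t, k < b := by
        intro b hb
        rcases Finset.mem_symmDiff.mp hb with ⟨hb, -⟩ | ⟨hb, -⟩
        · exact Finset.mem_singleton.mp hb ▸ hgt
        · exact hk b hb
      refine ⟨-c, ?_⟩
      rw [genProd_insert_of_lt hk, Finset.insert_eq_singleton_symmDiff hkt, symmDiff_left_comm,
        ← Finset.insert_eq_singleton_symmDiff (fun hm => lt_irrefl k (hk' k hm)),
        genProd_insert_of_lt hk', ← mul_assoc, gen_mul_gen_of_ne hgt.ne',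
        neg_mul, mul_assoc, hc, mul_smul_comm, neg_smul]

lemma genProd_mul_genProd (s t : Finset (Fin m)) :
    ∃ c : ℝ, genProd m s * genProd m t = c • genProd m (s ∆ t) := by
  induction s using Finset.induction_on_min with
  | empty => exact ⟨1, by rw [← Finset.bot_eq_empty, bot_symmDiff]; simp⟩
  | insert k s hk ih =>
    obtain ⟨c, hc⟩ := ih
    obtain ⟨c', hc'⟩ := gen_mul_genProd k (s ∆ t)
    refine ⟨c * c', ?_⟩
    rw [genProd_insert_of_lt hk, mul_assoc, hc, mul_smul_comm, hc', smul_smul,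
      Finset.insert_eq_singleton_symmDiff (fun hm => lt_irrefl k (hk k hm)), symmDiff_assoc]

lemma involute_genProd (s : Finset (Fin m)) :
    involute (genProd m s) = (-1 : ℝ) ^ s.card • genProd m s := by
  induction s using Finset.induction_on_min with
  | empty => simp
  | insert k s hk ih =>
    rw [genProd_insert_of_lt hk, map_mul, ih, gen, involute_ι,
      Finset.card_insert_of_notMem (fun hm => lt_irrefl k (hk k hm)), pow_succ, mul_smul_comm,
      neg_mul, smul_neg, mul_neg_one, neg_smul]

lemma reverse_genProd (s : Finset (Fin m)) : ∃ c : ℝ, reverse (genProd m s) = c • genProd m s := by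
  induction s using Finset.induction_on_min with
  | empty => exact ⟨1, by simp⟩
  | insert k s hk ih =>
    obtain ⟨c, hc⟩ := ih
    obtain ⟨c', hc'⟩ := genProd_mul_genProd s {k}
    refine ⟨c * c', ?_⟩
    calc reverse (genProd m (insert k s)) = reverse (genProd m s) * genProd m {k} := by
          rw [genProd_insert_of_lt hk, reverse.map_mul, genProd_singleton, gen, reverse_ι]
      _ = (c * c') • genProd m ({k} ∆ s) := by
          rw [hc, smul_mul_assoc, hc', smul_smul, symmDiff_comm]
      _ = (c * c') • genProd m (insert k s) := by
          rw [← Finset.insert_eq_singleton_symmDiff (fun hm => lt_irrefl k (hk k hm))]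

lemma cconj_mul (x y : CliffordAlgebra (Qneg m)) : cconj (x * y) = cconj y * cconj x := by
  rw [cconj, map_mul, reverse.map_mul, cconj, cconj]

lemma cconj_gen (h : Fin m) : cconj (gen m h) = -gen m h := by
  rw [cconj, gen, involute_ι, map_neg, reverse_ι]

lemma cconj_genProd_mul_self (s : Finset (Fin m)) : cconj (genProd m s) * genProd m s = 1 := by
  induction s using Finset.induction_on_min with
  | empty => simp [cconj]
  | insert k s hk ih =>
    rw [genProd_insert_of_lt hk, cconj_mul, cconj_gen, mul_assoc, ← mul_assoc (-gen m k),
      neg_mul, gen_mul_self, neg_neg, one_mul, ih]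

lemma contractLeft_genProd (d : Module.Dual ℝ (Fin m → ℝ)) {s : Finset (Fin m)}
    (hd : ∀ j ∈ s, d (Pi.single j 1) = 0) : contractLeft d (genProd m s) = 0 := by
  induction s using Finset.induction_on_min with
  | empty => simp
  | insert k s hk ih =>
    rw [genProd_insert_of_lt hk, gen, contractLeft_ι_mul, hd k (s.mem_insert_self k),
      ih fun j hj => hd j (Finset.mem_insert_of_mem hj), zero_smul, mul_zero, sub_zero]

lemma scalarPart_genProd (s : Finset (Fin m)) :
    scalarPart (genProd m s) = if s = ∅ then 1 else 0 := by
  induction s using Finset.induction_on_min with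
  | empty => simp [scalarPart_one]
  | insert k s hk _ =>
    rw [if_neg (Finset.insert_ne_empty k s), genProd_insert_of_lt hk, gen, scalarPart_ι_mul,
      contractLeft_genProd, scalarPart_zero, neg_zero]
    intro j hj
    rw [associated_neg_Qneg_single, if_neg (hk j hj).ne]

lemma span_range_genProd : Submodule.span ℝ (Set.range (genProd m)) = ⊤ := by
  set V := Submodule.span ℝ (Set.range (genProd m))
  have hone : (1 : CliffordAlgebra (Qneg m)) ∈ V :=
    genProd_empty (m := m) ▸ Submodule.subset_span ⟨∅, rfl⟩
  have hmul : V * V ≤ V := by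
    rw [Submodule.span_mul_span, Submodule.span_le]
    rintro _ ⟨_, ⟨s, rfl⟩, _, ⟨t, rfl⟩, rfl⟩
    obtain ⟨c, hc⟩ := genProd_mul_genProd s t
    simpa only [hc, SetLike.mem_coe] using V.smul_mem c (Submodule.subset_span ⟨_, rfl⟩)
  have hι : Set.range (ι (Qneg m)) ⊆ V := by
    rintro _ ⟨v, rfl⟩
    rw [← (Pi.basisFun ℝ (Fin m)).sum_repr v, map_sum]
    refine V.sum_mem fun i _ => ?_
    rw [map_smul, Pi.basisFun_apply, ← gen, ← genProd_singleton]
    exact V.smul_mem _ (Submodule.subset_span ⟨_, rfl⟩)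
  let A := V.toSubalgebra hone fun x y hx hy => hmul (Submodule.mul_mem_mul hx hy)
  have hA : Algebra.adjoin ℝ (Set.range (ι (Qneg m))) ≤ A := Algebra.adjoin_le hι
  rw [adjoin_range_ι] at hA
  exact eq_top_iff.mpr fun x _ => hA trivial

lemma scalarPart_involute (x : CliffordAlgebra (Qneg m)) :
    scalarPart (involute x) = scalarPart x := by
  suffices scalarPartₗ m ∘ₗ involute.toLinearMap = scalarPartₗ m from LinearMap.congr_fun this x
  refine LinearMap.ext_on_range span_range_genProd fun s => ?_
  rcases eq_or_ne s ∅ with rfl | hs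
  · simp
  · simp [involute_genProd, scalarPart_genProd, hs]

lemma scalarPart_reverse (x : CliffordAlgebra (Qneg m)) :
    scalarPart (reverse x) = scalarPart x := by
  suffices scalarPartₗ m ∘ₗ reverse = scalarPartₗ m from LinearMap.congr_fun this x
  refine LinearMap.ext_on_range span_range_genProd fun s => ?_
  rcases eq_or_ne s ∅ with rfl | hs
  · simp
  · obtain ⟨c, hc⟩ := reverse_genProd s
    simp [hc, scalarPart_genProd, hs]

lemma scalarPart_genProd_mul_genProd_of_ne {s t : Finset (Fin m)} (hst : s ≠ t) :
    scalarPart (genProd m s * genProd m t) = 0 := by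
  obtain ⟨c, hc⟩ := genProd_mul_genProd s t
  rw [hc, scalarPart_smul, scalarPart_genProd, if_neg (Finset.symmDiff_eq_empty.not.mpr hst),
    mul_zero]

lemma scalarPart_mul_comm (x y : CliffordAlgebra (Qneg m)) :
    scalarPart (x * y) = scalarPart (y * x) := by
  let T := (LinearMap.mul ℝ (CliffordAlgebra (Qneg m))).compr₂ (scalarPartₗ m)
  suffices T = T.flip from LinearMap.congr_fun₂ this x y
  refine LinearMap.ext_on_range span_range_genProd fun s =>
    LinearMap.ext_on_range span_range_genProd fun t => ?_
  rcases eq_or_ne s t with rfl | hst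
  · rfl
  · simp [T, scalarPart_genProd_mul_genProd_of_ne hst,
      scalarPart_genProd_mul_genProd_of_ne hst.symm]

noncomputable def cliffordInner (m : ℕ) :
    CliffordAlgebra (Qneg m) →ₗ[ℝ] CliffordAlgebra (Qneg m) →ₗ[ℝ] ℝ :=
  ((LinearMap.mul ℝ _).compr₂ (scalarPartₗ m)).comp (reverse ∘ₗ involute.toLinearMap)

lemma cliffordInner_apply (x y : CliffordAlgebra (Qneg m)) :
    cliffordInner m x y = scalarPart (cconj x * y) := rfl

lemma cnormSq_eq_cliffordInner (x : CliffordAlgebra (Qneg m)) :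
    cnormSq x = cliffordInner m x x := rfl

lemma cliffordInner_genProd (s t : Finset (Fin m)) :
    cliffordInner m (genProd m s) (genProd m t) = if s = t then 1 else 0 := by
  rcases eq_or_ne s t with rfl | hst
  · rw [cliffordInner_apply, cconj_genProd_mul_self, scalarPart_one, if_pos rfl]
  · obtain ⟨c, hc⟩ := reverse_genProd s
    rw [cliffordInner_apply, cconj, involute_genProd, map_smul, hc, smul_smul, smul_mul_assoc,
      scalarPart_smul, scalarPart_genProd_mul_genProd_of_ne hst, mul_zero, if_neg hst]

lemma cliffordInner_comm (x y : CliffordAlgebra (Qneg m)) :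
    cliffordInner m x y = cliffordInner m y x := by
  suffices cliffordInner m = (cliffordInner m).flip from LinearMap.congr_fun₂ this x y
  refine LinearMap.ext_on_range span_range_genProd fun s =>
    LinearMap.ext_on_range span_range_genProd fun t => ?_
  simp [cliffordInner_genProd, eq_comm]

lemma cliffordInner_involute_right (x y : CliffordAlgebra (Qneg m)) :
    cliffordInner m x (involute y) = scalarPart (x * reverse y) := by
  rw [cliffordInner_apply, cconj, reverse_involute, ← map_mul, scalarPart_involute,
    ← scalarPart_reverse, reverse.map_mul, reverse_reverse, scalarPart_mul_comm]

lemma cnormSq_involute (x : CliffordAlgebra (Qneg m)) : cnormSq (involute x) = cnormSq x := by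
  rw [cnormSq_eq_cliffordInner, cliffordInner_involute_right, ← scalarPart_reverse,
    reverse.map_mul, reverse_reverse, scalarPart_mul_comm]
  rfl

lemma cnormSq_add (x y : CliffordAlgebra (Qneg m)) :
    cnormSq (x + y) = cnormSq x + cnormSq y + 2 * cliffordInner m x y := by
  simp only [cnormSq_eq_cliffordInner, map_add, LinearMap.add_apply, cliffordInner_comm y x]
  ring

lemma cnormSq_sub (x y : CliffordAlgebra (Qneg m)) :
    cnormSq (x - y) = cnormSq x + cnormSq y - 2 * cliffordInner m x y := by
  simp only [cnormSq_eq_cliffordInner, map_sub, LinearMap.sub_apply, cliffordInner_comm y x]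
  ring

lemma cnormSq_sum_smul_genProd (c : Finset (Fin m) → ℝ) :
    cnormSq (∑ s, c s • genProd m s) = ∑ s, c s ^ 2 := by
  simp [cnormSq_eq_cliffordInner, map_sum, cliffordInner_genProd, sq]

lemma cnormSq_nonneg (x : CliffordAlgebra (Qneg m)) : 0 ≤ cnormSq x := by
  obtain ⟨c, rfl⟩ := (Submodule.mem_span_range_iff_exists_fun ℝ).mp
    (span_range_genProd (m := m) ▸ Submodule.mem_top : x ∈ _)
  rw [cnormSq_sum_smul_genProd]
  positivity

end

/-- for `M = [[α,β],[γ,δ]] ∈ SL₊(Γ_n(ℝ))`, one has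
`|α - δ'|² + |β + γ'|² = ‖M‖² - 2` (with `'` the grade involution), and hence `‖M‖² ≥ 2`. -/
theorem stmt13 {m : ℕ} (α β γ δ : CliffordAlgebra (Qneg m)) (h : IsVahlen α β γ δ) :
    cnormSq (α - involute δ) + cnormSq (β + involute γ) =
      (cnormSq α + cnormSq β + cnormSq γ + cnormSq δ) - 2 ∧
    2 ≤ cnormSq α + cnormSq β + cnormSq γ + cnormSq δ := by
  have hdet : scalarPart (α * reverse δ) - scalarPart (β * reverse γ) = 1 := by
    rw [← scalarPart_sub, h.2.2.2.2.1, scalarPart_one]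
  have hnorm : cnormSq (α - involute δ) + cnormSq (β + involute γ) =
      (cnormSq α + cnormSq β + cnormSq γ + cnormSq δ) - 2 := by
    rw [cnormSq_sub, cnormSq_add, cnormSq_involute, cnormSq_involute, cliffordInner_involute_right,
      cliffordInner_involute_right]
    linarith
  exact ⟨hnorm, by linarith [cnormSq_nonneg (α - involute δ), cnormSq_nonneg (β + involute γ)]⟩
end
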